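/- Let f : [0,1] → ℝ be continuous and positive and let β > 0. Let G = (V,E) be any finite simple graph with any arrival order v_1, …, v_n of its vertices, and run PrimalDual with allocation function f and constant β. Then after each step i (1 ≤ i ≤ n), the potentials and edge values satisfy Σ_{j ≤ i} y_{v_j} = β · Σ_{(v_j, v_l) ∈ E, j,l ≤ i} x_{v_j v_l}; that is, the dual objective value always equals exactly β times the primal objective value. -/

import Mathlib

/-!
When vertex `i` arrives with water level `w`, the dual objective grows by the cost
`∑ max (w - y_j) 0` of raising its earlier neighbours plus the new potential `1 - w`, while `β`
times the primal objective grows by `cost * (1 + (1 - w) / f w)`. These agree because every step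
is tight: `w = 1` or `cost = f w`, the latter since `w` is the supremum of the closed set of
levels whose cost is at most `f`, and the cost is `0 ≤ f 0` at level `0`.
-/

open Finset

/-- The water level chosen by `GreedyAllocation` with allocation function `f`:
the supremum of `t ∈ [0,1]` such that raising all potentials in `S` up to `t`
costs at most `f t`. -/
noncomputable def waterLevel {ι : Type*} (f : ℝ → ℝ) (S : Finset ι) (y : ι → ℝ) : ℝ :=
  sSup {t ∈ Set.Icc (0:ℝ) 1 | ∑ u ∈ S, max (t - y u) 0 ≤ f t}

/-- The previously arrived neighbors of vertex `i` (vertices arrive in the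
order `0, 1, …, n-1`; `E` is the adjacency predicate of the graph). -/
def neighborsBefore {n : ℕ} (E : Fin n → Fin n → Bool) (i : Fin n) : Finset (Fin n) :=
  Finset.univ.filter fun j => j < i ∧ E j i = true

/-- Potentials maintained by `GreedyAllocation` with allocation function `f`
after `i` vertices have been processed. When vertex `i` arrives, the water
level `w` is computed over its previously arrived neighbors; each such
neighbor's potential is raised to at least `w`, and vertex `i` receives
potential `1 - w`. -/
noncomputable def greedyPotential (f : ℝ → ℝ) {n : ℕ} (E : Fin n → Fin n → Bool) :
    ℕ → Fin n → ℝ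
  | 0 => fun _ => 0
  | (i + 1) => fun v =>
      if h : i < n then
        let vi : Fin n := ⟨i, h⟩
        let w := waterLevel f (neighborsBefore E vi) (greedyPotential f E i)
        if v = vi then 1 - w
        else if v ∈ neighborsBefore E vi then max (greedyPotential f E i v) w
        else greedyPotential f E i v
      else greedyPotential f E i v

/-- The water level used when processing vertex `i`. -/
noncomputable def stepLevel (f : ℝ → ℝ) {n : ℕ} (E : Fin n → Fin n → Bool) (i : Fin n) : ℝ :=
  waterLevel f (neighborsBefore E i) (greedyPotential f E i.val)

/-- The edge values set by the `PrimalDual` algorithm: when vertex `i` arrives,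
for each previously arrived neighbor `j` the edge `(j,i)` receives value
`(max(w_i - y_j, 0)/β)·(1 + (1 - w_i)/f(w_i))`, using the potentials before
updating; all other pairs get `0`. -/
noncomputable def pdEdge (f : ℝ → ℝ) (β : ℝ) {n : ℕ} (E : Fin n → Fin n → Bool)
    (j i : Fin n) : ℝ :=
  if j < i ∧ E j i = true then
    (max (stepLevel f E i - greedyPotential f E i.val j) 0 / β) *
      (1 + (1 - stepLevel f E i) / f (stepLevel f E i))
  else 0

/-- At a supremum `w < 1`, `f < g` holds on `(w, 1]`, hence `f w ≤ g w` in the limit. -/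
lemma sSup_setOf_le_eq_one_or_eq {f g : ℝ → ℝ} (hf : ContinuousOn f (Set.Icc 0 1))
    (hg : ContinuousOn g (Set.Icc 0 1)) (h0 : g 0 ≤ f 0) :
    sSup {t ∈ Set.Icc (0:ℝ) 1 | g t ≤ f t} = 1 ∨
      g (sSup {t ∈ Set.Icc (0:ℝ) 1 | g t ≤ f t}) = f (sSup {t ∈ Set.Icc (0:ℝ) 1 | g t ≤ f t}) := by
  set A := {t ∈ Set.Icc (0:ℝ) 1 | g t ≤ f t}
  have hbdd : BddAbove A := ⟨1, fun t ht => ht.1.2⟩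
  have hwA : sSup A ∈ A :=
    (isClosed_Icc.isClosed_le hg hf).csSup_mem ⟨0, ⟨Set.left_mem_Icc.2 zero_le_one, h0⟩⟩ hbdd
  set w := sSup A
  rcases eq_or_lt_of_le hwA.1.2 with hw1 | hw1
  · exact Or.inl hw1
  have hIoc : Set.Ioc w 1 ⊆ Set.Icc 0 1 := fun t ht => ⟨hwA.1.1.trans ht.1.le, ht.2⟩
  have hgt : ∀ t ∈ Set.Ioc w 1, f t ≤ g t := fun t ht =>
    le_of_lt <| not_le.1 fun hle => ht.1.not_ge (le_csSup hbdd ⟨hIoc ht, hle⟩)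
  have hcl : w ∈ closure (Set.Ioc w 1) := by
    rw [closure_Ioc hw1.ne]
    exact Set.left_mem_Icc.2 hw1.le
  exact Or.inr <| le_antisymm hwA.2 <|
    ContinuousWithinAt.closure_le hcl ((hf w hwA.1).mono hIoc) ((hg w hwA.1).mono hIoc) hgt

section WaterLevel

variable {ι : Type*} (f : ℝ → ℝ) (S : Finset ι) (y : ι → ℝ)

lemma waterLevel_mem_Icc : waterLevel f S y ∈ Set.Icc (0:ℝ) 1 := by
  unfold waterLevel
  set A := {t ∈ Set.Icc (0:ℝ) 1 | ∑ u ∈ S, max (t - y u) 0 ≤ f t}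
  rcases A.eq_empty_or_nonempty with hA | ⟨t, ht⟩
  · rw [hA, Real.sSup_empty]
    exact Set.left_mem_Icc.2 zero_le_one
  · have hbdd : BddAbove A := ⟨1, fun t ht => ht.1.2⟩
    exact ⟨ht.1.1.trans (le_csSup hbdd ht), csSup_le ⟨t, ht⟩ fun x hx => hx.1.2⟩

variable {f S y}

lemma waterLevel_eq_one_or_sum_eq (hf : ContinuousOn f (Set.Icc 0 1)) (hf0 : 0 ≤ f 0)
    (hy : ∀ u ∈ S, 0 ≤ y u) :
    waterLevel f S y = 1 ∨ ∑ u ∈ S, max (waterLevel f S y - y u) 0 = f (waterLevel f S y) := by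
  have hcost : Continuous fun t : ℝ => ∑ u ∈ S, max (t - y u) 0 := by fun_prop
  refine sSup_setOf_le_eq_one_or_eq hf hcost.continuousOn ?_
  rwa [sum_eq_zero fun u hu => max_eq_right (by linarith [hy u hu])]

end WaterLevel

section PrimalDual

variable (f : ℝ → ℝ) {n : ℕ} (E : Fin n → Fin n → Bool)

def arrived (n i : ℕ) : Finset (Fin n) :=
  univ.filter fun j => (j : ℕ) < i

def revealedEdges (i : ℕ) : Finset (Fin n × Fin n) :=
  (univ ×ˢ univ).filter fun p => p.1 < p.2 ∧ (p.2 : ℕ) < i ∧ E p.1 p.2 = true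

lemma greedyPotential_succ {i : ℕ} (h : i < n) (v : Fin n) :
    greedyPotential f E (i + 1) v =
      if v = ⟨i, h⟩ then 1 - stepLevel f E ⟨i, h⟩
      else if v ∈ neighborsBefore E ⟨i, h⟩ then
        max (greedyPotential f E i v) (stepLevel f E ⟨i, h⟩)
      else greedyPotential f E i v := by
  rw [greedyPotential]
  simp only [dif_pos h]
  rfl

lemma greedyPotential_succ_of_not_lt {i : ℕ} (h : ¬ i < n) :
    greedyPotential f E (i + 1) = greedyPotential f E i := by
  ext v
  rw [greedyPotential]
  simp only [dif_neg h]

lemma stepLevel_mem_Icc (v : Fin n) : stepLevel f E v ∈ Set.Icc (0:ℝ) 1 :=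
  waterLevel_mem_Icc _ _ _

lemma greedyPotential_nonneg (i : ℕ) (v : Fin n) : 0 ≤ greedyPotential f E i v := by
  induction i generalizing v with
  | zero => simp [greedyPotential]
  | succ i ih =>
    by_cases h : i < n
    · rw [greedyPotential_succ f E h]
      split_ifs
      · linarith [(stepLevel_mem_Icc f E ⟨i, h⟩).2]
      · exact (ih v).trans (le_max_left _ _)
      · exact ih v
    · rw [greedyPotential_succ_of_not_lt f E h]
      exact ih v

lemma stepLevel_eq_one_or_sum_eq (hf : ContinuousOn f (Set.Icc 0 1)) (hf0 : 0 ≤ f 0)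
    (v : Fin n) :
    stepLevel f E v = 1 ∨
      ∑ j ∈ neighborsBefore E v, max (stepLevel f E v - greedyPotential f E v j) 0 =
        f (stepLevel f E v) :=
  waterLevel_eq_one_or_sum_eq hf hf0 fun u _ => greedyPotential_nonneg f E _ u

lemma neighborsBefore_subset_arrived {i : ℕ} (h : i < n) :
    neighborsBefore E ⟨i, h⟩ ⊆ arrived n i := by
  intro j hj
  simp only [neighborsBefore, arrived, mem_filter, mem_univ, true_and] at hj ⊢
  exact hj.1

lemma arrived_succ {i : ℕ} (h : i < n) :
    arrived n (i + 1) = insert ⟨i, h⟩ (arrived n i) := by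
  ext j
  simp only [arrived, mem_filter, mem_insert, mem_univ, true_and, Fin.ext_iff]
  omega

lemma revealedEdges_succ {i : ℕ} (h : i < n) :
    revealedEdges E (i + 1) = revealedEdges E i ∪ neighborsBefore E ⟨i, h⟩ ×ˢ {⟨i, h⟩} := by
  ext ⟨a, b⟩
  simp only [revealedEdges, neighborsBefore, mem_union, mem_filter, mem_product, mem_singleton,
    mem_univ, true_and, Fin.ext_iff]
  constructor
  · rintro ⟨hab, hb, he⟩
    rcases Nat.lt_succ_iff_lt_or_eq.1 hb with hb | hb
    · exact Or.inl ⟨hab, hb, he⟩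
    · obtain rfl : b = ⟨i, h⟩ := Fin.ext hb
      exact Or.inr ⟨⟨hab, he⟩, rfl⟩
  · rintro (⟨hab, hb, he⟩ | ⟨⟨hab, he⟩, hb⟩)
    · exact ⟨hab, hb.trans (Nat.lt_succ_self i), he⟩
    · obtain rfl : b = ⟨i, h⟩ := Fin.ext hb
      exact ⟨hab, Nat.lt_succ_self i, he⟩

lemma disjoint_revealedEdges_step {i : ℕ} (h : i < n) :
    Disjoint (revealedEdges E i) (neighborsBefore E ⟨i, h⟩ ×ˢ {⟨i, h⟩}) := by
  rw [disjoint_left]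
  rintro ⟨a, b⟩ hab hb
  simp only [revealedEdges, mem_filter, mem_product, mem_singleton] at hab hb
  rw [hb.2] at hab
  exact lt_irrefl i hab.2.2.1

lemma sum_greedyPotential_succ {i : ℕ} (h : i < n) :
    ∑ j ∈ arrived n (i + 1), greedyPotential f E (i + 1) j =
      ∑ j ∈ arrived n i, greedyPotential f E i j +
        ∑ j ∈ neighborsBefore E ⟨i, h⟩,
          max (stepLevel f E ⟨i, h⟩ - greedyPotential f E i j) 0 +
        (1 - stepLevel f E ⟨i, h⟩) := by
  set v : Fin n := ⟨i, h⟩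
  set w := stepLevel f E v
  set y := greedyPotential f E i
  have hv : v ∉ arrived n i := by simp [v, arrived]
  have hincr : ∀ j ∈ arrived n i, greedyPotential f E (i + 1) j =
      y j + if j ∈ neighborsBefore E v then max (w - y j) 0 else 0 := by
    intro j hj
    rw [greedyPotential_succ f E h, if_neg (ne_of_mem_of_not_mem hj hv)]
    split_ifs
    · rw [← max_add_add_left, add_sub_cancel, add_zero, max_comm]
    · rw [add_zero]
  rw [arrived_succ h, sum_insert hv, greedyPotential_succ f E h, if_pos rfl, sum_congr rfl hincr,
    sum_add_distrib, sum_ite_mem, inter_eq_right.2 (neighborsBefore_subset_arrived E h)]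
  ring

lemma sum_pdEdge_succ (β : ℝ) {i : ℕ} (h : i < n) :
    ∑ p ∈ revealedEdges E (i + 1), pdEdge f β E p.1 p.2 =
      ∑ p ∈ revealedEdges E i, pdEdge f β E p.1 p.2 +
        ∑ j ∈ neighborsBefore E ⟨i, h⟩, pdEdge f β E j ⟨i, h⟩ := by
  rw [revealedEdges_succ E h, sum_union (disjoint_revealedEdges_step E h), sum_product,
    sum_congr rfl fun _ _ => sum_singleton _ _]

lemma mul_sum_pdEdge_eq (hf : ContinuousOn f (Set.Icc 0 1))
    (hfpos : ∀ t ∈ Set.Icc (0:ℝ) 1, 0 < f t) {β : ℝ} (hβ : β ≠ 0) (v : Fin n) :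
    β * ∑ j ∈ neighborsBefore E v, pdEdge f β E j v =
      ∑ j ∈ neighborsBefore E v, max (stepLevel f E v - greedyPotential f E v j) 0 +
        (1 - stepLevel f E v) := by
  have hedge : ∀ j ∈ neighborsBefore E v, β * pdEdge f β E j v =
      max (stepLevel f E v - greedyPotential f E v j) 0 *
        (1 + (1 - stepLevel f E v) / f (stepLevel f E v)) := by
    intro j hj
    rw [pdEdge, if_pos (by simpa [neighborsBefore] using hj)]
    field_simp
  have htight :=
    stepLevel_eq_one_or_sum_eq f E hf (hfpos 0 (Set.left_mem_Icc.2 zero_le_one)).le v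
  have hfw := hfpos _ (stepLevel_mem_Icc f E v)
  set w := stepLevel f E v
  set cost := ∑ j ∈ neighborsBefore E v, max (w - greedyPotential f E v j) 0
  have hpaid : cost * ((1 - w) / f w) = 1 - w := by
    rcases htight with hw | hw
    · simp [hw]
    · rw [hw, mul_div_cancel₀ _ hfw.ne']
  rw [mul_sum, sum_congr rfl hedge, ← sum_mul, mul_add, mul_one, hpaid]

theorem sum_greedyPotential_eq_mul_sum_pdEdge (hf : ContinuousOn f (Set.Icc 0 1))
    (hfpos : ∀ t ∈ Set.Icc (0:ℝ) 1, 0 < f t) {β : ℝ} (hβ : β ≠ 0) {i : ℕ} (hi : i ≤ n) :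
    ∑ j ∈ arrived n i, greedyPotential f E i j =
      β * ∑ p ∈ revealedEdges E i, pdEdge f β E p.1 p.2 := by
  induction i with
  | zero => simp [arrived, revealedEdges]
  | succ i ih =>
    have h : i < n := hi
    rw [sum_greedyPotential_succ f E h, sum_pdEdge_succ f E β h, mul_add, ← ih h.le,
      mul_sum_pdEdge_eq f E hf hfpos hβ, add_assoc]

end PrimalDual

theorem primalDual_invariant2_general (f : ℝ → ℝ)
    (hfc : ContinuousOn f (Set.Icc 0 1))
    (hfpos : ∀ t ∈ Set.Icc (0:ℝ) 1, 0 < f t)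
    (β : ℝ) (hβ : 0 < β)
    (n : ℕ) (E : Fin n → Fin n → Bool) :
    ∀ i : ℕ, 1 ≤ i → i ≤ n →
      ∑ j ∈ Finset.univ.filter (fun j : Fin n => (j : ℕ) < i),
          greedyPotential f E i j
        = β * ∑ p ∈ (Finset.univ ×ˢ Finset.univ).filter
            (fun p : Fin n × Fin n => p.1 < p.2 ∧ (p.2 : ℕ) < i ∧ E p.1 p.2 = true),
            pdEdge f β E p.1 p.2 :=
  fun _ _ hi => sum_greedyPotential_eq_mul_sum_pdEdge f E hfc hfpos hβ.ne' hi

/-- Invariant 2 of the primal-dual analysis: after each step `i` of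
`PrimalDual` (with continuous positive allocation function `f` and constant
`β > 0`), the total potential of the arrived vertices equals exactly `β` times
the total value placed on the revealed edges. -/
theorem primalDual_invariant2 (f : ℝ → ℝ)
    (hfc : ContinuousOn f (Set.Icc 0 1))
    (hfpos : ∀ t ∈ Set.Icc (0:ℝ) 1, 0 < f t)
    (β : ℝ) (hβ : 0 < β)
    (n : ℕ) (E : Fin n → Fin n → Bool)
    (hsymm : ∀ i j, E i j = E j i) (hloop : ∀ i, E i i = false) :
    ∀ i : ℕ, 1 ≤ i → i ≤ n →
      ∑ j ∈ Finset.univ.filter (fun j : Fin n => (j : ℕ) < i),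
          greedyPotential f E i j
        = β * ∑ p ∈ (Finset.univ ×ˢ Finset.univ).filter
            (fun p : Fin n × Fin n => p.1 < p.2 ∧ (p.2 : ℕ) < i ∧ E p.1 p.2 = true),
            pdEdge f β E p.1 p.2 :=
  primalDual_invariant2_general f hfc hfpos β hβ n E
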